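/- arXiv:1911.04842 — 3 statements merged into one kernel-verified Lean document; each statement's English description precedes it below -/
import Mathlib

section
/- (Lemma 3, part (b)) Let $\mathcal{P}_{G_X}^*$ be the set of connected components of the confusability graph $G_X$. The map $\mathcal{X} \mapsto \llbracket S\mid\mathcal{X}\rrbracket := \bigcup_{x \in \mathcal{X}} \llbracket S\mid x\rrbracket$ is a bijection from $\mathcal{P}_{G_X}^*$ onto the set of equivalence classes of overlap connectedness on $\llbracket S\rrbracket$; in particular, $\{\llbracket S\mid\mathcal{X}\rrbracket : \mathcal{X} \in \mathcal{P}_{G_X}^*\}$ is the (unique) overlap partition of $\llbracket S\rrbracket$, and the maximin information satisfies $I_*(S;X) = \log_2 |\mathcal{P}_{G_X}^*|$, i.e., the number of equivalence classes of overlap connectedness equals the number of connected components of $G_X$. -/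
/-- The conditional range `⟦S∣x⟧ = {S(ω) : ω ∈ Ω, X(ω) = x}`. -/
def condRange {Ω 𝕊 𝕏 : Type*} (S : Ω → 𝕊) (X : Ω → 𝕏) (x : 𝕏) : Set 𝕊 :=
  {s | ∃ ω, X ω = x ∧ S ω = s}

/-- Overlap connectedness. -/
def OverlapConn {Ω 𝕊 𝕏 : Type*} (S : Ω → 𝕊) (X : Ω → 𝕏) (s s' : 𝕊) : Prop :=
  ∃ n : ℕ, ∃ xs : Fin (n + 1) → 𝕏,
    (∀ i, xs i ∈ Set.range X) ∧
    s ∈ condRange S X (xs 0) ∧ s' ∈ condRange S X (xs (Fin.last n)) ∧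
    ∀ i : Fin n, (condRange S X (xs i.castSucc) ∩ condRange S X (xs i.succ)).Nonempty

/-- The set `𝒫*` of equivalence classes of overlap connectedness on `⟦S⟧`. -/
def overlapClasses {Ω 𝕊 𝕏 : Type*} (S : Ω → 𝕊) (X : Ω → 𝕏) : Set (Set 𝕊) :=
  {C | ∃ s ∈ Set.range S, C = {s' | OverlapConn S X s s'}}

/-- Adjacency in the confusability graph `G_X`: distinct points of `⟦X⟧` whose conditional
ranges intersect. -/
def ConfAdj {Ω 𝕊 𝕏 : Type*} (S : Ω → 𝕊) (X : Ω → 𝕏) (x x' : 𝕏) : Prop :=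
  x ≠ x' ∧ x ∈ Set.range X ∧ x' ∈ Set.range X ∧
    (condRange S X x ∩ condRange S X x').Nonempty

/-- Connectivity (same connected component) in `G_X`. -/
def ConfConn {Ω 𝕊 𝕏 : Type*} (S : Ω → 𝕊) (X : Ω → 𝕏) (x x' : 𝕏) : Prop :=
  x ∈ Set.range X ∧ x' ∈ Set.range X ∧ Relation.ReflTransGen (ConfAdj S X) x x'

/-- The set of connected components of the confusability graph `G_X`. -/
def confComponents {Ω 𝕊 𝕏 : Type*} (S : Ω → 𝕊) (X : Ω → 𝕏) : Set (Set 𝕏) :=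
  {C | ∃ x ∈ Set.range X, C = {x' | ConfConn S X x x'}}

section Aux

variable {Ω 𝕊 𝕏 : Type*} (S : Ω → 𝕊) (X : Ω → 𝕏)

/-- One overlap step: `s` and `t` lie in a common conditional range. -/
def OvStep (s t : 𝕊) : Prop := ∃ x, s ∈ condRange S X x ∧ t ∈ condRange S X x

variable {S X}

lemma condRange_subset_range {x : 𝕏} : condRange S X x ⊆ Set.range S :=
  fun _ ⟨ω, _, h⟩ => ⟨ω, h⟩

lemma mem_rangeX_of_condRange {x : 𝕏} {s : 𝕊} (h : s ∈ condRange S X x) :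
    x ∈ Set.range X := by obtain ⟨ω, h1, _⟩ := h; exact ⟨ω, h1⟩

lemma ovStep_symm : Symmetric (OvStep S X) := fun _ _ ⟨x, h1, h2⟩ => ⟨x, h2, h1⟩

lemma confAdj_symm : Symmetric (ConfAdj S X) :=
  fun _ _ ⟨hne, h1, h2, ⟨t, ht1, ht2⟩⟩ => ⟨hne.symm, h2, h1, ⟨t, ht2, ht1⟩⟩

lemma overlapConn_to_rtg {s s' : 𝕊} (h : OverlapConn S X s s') :
    Relation.ReflTransGen (OvStep S X) s s' := by
  obtain ⟨n, xs, _, hs, hs', hov⟩ := h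
  clear * - hs hs' hov
  induction n generalizing s with
  | zero =>
    exact Relation.ReflTransGen.single ⟨xs 0, hs, by simpa [Fin.last] using hs'⟩
  | succ n ih =>
    obtain ⟨t, ht0, ht1⟩ := hov 0
    have h1 : Relation.ReflTransGen (OvStep S X) s t :=
      Relation.ReflTransGen.single ⟨xs 0, hs, by simpa using ht0⟩
    have h2 := ih (xs := fun i => xs i.succ) (s := t)
      (by simpa using ht1)
      (by simpa [Fin.succ_last] using hs')
      (fun i => by exact hov i.succ)
    exact h1.trans h2

lemma rtg_to_overlapConn {s s' : 𝕊} (hs' : s' ∈ Set.range S)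
    (h : Relation.ReflTransGen (OvStep S X) s s') : OverlapConn S X s s' := by
  induction h using Relation.ReflTransGen.head_induction_on with
  | refl =>
    obtain ⟨ω, rfl⟩ := hs'
    exact ⟨0, fun _ => X ω, fun _ => ⟨ω, rfl⟩, ⟨ω, rfl, rfl⟩, ⟨ω, rfl, rfl⟩,
      fun i => i.elim0⟩
  | head hstep _ ih =>
    obtain ⟨x, ha, hc⟩ := hstep
    obtain ⟨n, xs, hmem, hc', hlast, hov⟩ := ih
    refine ⟨n + 1, Fin.cons x xs, ?_, ?_, ?_, ?_⟩
    · intro i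
      refine i.cases ?_ ?_
      · simpa using mem_rangeX_of_condRange ha
      · intro j; simpa using hmem j
    · simpa using ha
    · rw [← Fin.succ_last, Fin.cons_succ]; exact hlast
    · intro i
      refine i.cases ?_ ?_
      · have : (Fin.cons x xs : Fin (n+2) → 𝕏) ((0 : Fin (n+1)).castSucc) = x := by
          simp
        exact ⟨_, by simpa [this] using hc, by simpa [Fin.cons_succ] using hc'⟩
      · intro j
        have e1 : (Fin.cons x xs : Fin (n+2) → 𝕏) (j.succ.castSucc) = xs j.castSucc := by
          rw [← Fin.succ_castSucc, Fin.cons_succ]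
        have e2 : (Fin.cons x xs : Fin (n+2) → 𝕏) (j.succ.succ) = xs j.succ := by
          rw [Fin.cons_succ]
        rw [e1, e2]
        exact hov j

lemma rtg_conf_of_overlap {x x' : 𝕏}
    (h : (condRange S X x ∩ condRange S X x').Nonempty) :
    Relation.ReflTransGen (ConfAdj S X) x x' := by
  by_cases hxx : x = x'
  · exact hxx ▸ Relation.ReflTransGen.refl
  · obtain ⟨t, ht1, ht2⟩ := h
    exact Relation.ReflTransGen.single
      ⟨hxx, mem_rangeX_of_condRange ht1, mem_rangeX_of_condRange ht2, ⟨t, ht1, ht2⟩⟩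

lemma rtg_ov_to_conf {s s' : 𝕊} (h : Relation.ReflTransGen (OvStep S X) s s') :
    ∀ x x', s ∈ condRange S X x → s' ∈ condRange S X x' →
      Relation.ReflTransGen (ConfAdj S X) x x' := by
  induction h with
  | refl => exact fun x x' hx hx' => rtg_conf_of_overlap ⟨s, hx, hx'⟩
  | tail _ hstep ih =>
    obtain ⟨y, ht, hs'⟩ := hstep
    exact fun x x' hx hx' =>
      (ih x y hx ht).trans (rtg_conf_of_overlap ⟨_, hs', hx'⟩)

lemma rtg_conf_to_ov {x x' : 𝕏} (h : Relation.ReflTransGen (ConfAdj S X) x x') :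
    ∀ s s', s ∈ condRange S X x → s' ∈ condRange S X x' →
      Relation.ReflTransGen (OvStep S X) s s' := by
  induction h with
  | refl => exact fun s s' hs hs' => Relation.ReflTransGen.single ⟨x, hs, hs'⟩
  | tail _ hstep ih =>
    obtain ⟨_, _, _, ⟨t, ht1, ht2⟩⟩ := hstep
    exact fun s s' hs hs' =>
      (ih s t hs ht1).trans (Relation.ReflTransGen.single ⟨_, ht2, hs'⟩)

lemma confConn_symm {x y : 𝕏} (h : ConfConn S X x y) : ConfConn S X y x :=
  ⟨h.2.1, h.1, (by haveI : Std.Symm (ConfAdj S X) := ⟨fun _ _ h => confAdj_symm h⟩; exact Std.Symm.symm _ _ h.2.2)⟩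

lemma confConn_trans {x y z : 𝕏} (h1 : ConfConn S X x y) (h2 : ConfConn S X y z) :
    ConfConn S X x z := ⟨h1.1, h2.2.1, h1.2.2.trans h2.2.2⟩

lemma confConn_class_eq {x y : 𝕏} (h : ConfConn S X x y) :
    {x' | ConfConn S X x x'} = {x' | ConfConn S X y x'} := by
  ext x'
  exact ⟨fun h' => confConn_trans (confConn_symm h) h', fun h' => confConn_trans h h'⟩

/-- The image of the component of `x = X ω` is the overlap class of `S ω`. -/
lemma image_component {x : 𝕏} {ω : Ω} (hω : X ω = x) :
    (⋃ x' ∈ {x' | ConfConn S X x x'}, condRange S X x') = {s' | OverlapConn S X (S ω) s'} := by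
  have hs : S ω ∈ condRange S X x := ⟨ω, hω, rfl⟩
  ext s'
  simp only [Set.mem_iUnion, Set.mem_setOf_eq, exists_prop]
  constructor
  · rintro ⟨x', hconn, hs'⟩
    exact rtg_to_overlapConn (condRange_subset_range hs')
      (rtg_conf_to_ov hconn.2.2 _ _ hs hs')
  · intro hov
    obtain ⟨n, xs, hmem, _, hlast, _⟩ := id hov
    refine ⟨xs (Fin.last n), ⟨⟨ω, hω⟩, hmem _, ?_⟩, hlast⟩
    exact rtg_ov_to_conf (overlapConn_to_rtg hov) x _ hs hlast

end Aux

/-- Lemma 3(b): `𝒳 ↦ ⟦S∣𝒳⟧ = ⋃_{x ∈ 𝒳} ⟦S∣x⟧` is a bijection from the connected components of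
the confusability graph `G_X` onto the equivalence classes of overlap connectedness; in
particular the number of classes equals the number of components and
`I⋆(S;X) = log₂ |𝒫*_{G_X}|`. -/
theorem components_biject_overlap_classes {Ω 𝕊 𝕏 : Type*} [Nonempty Ω] [Fintype 𝕊] [Fintype 𝕏]
    (S : Ω → 𝕊) (X : Ω → 𝕏) :
    Set.BijOn (fun A : Set 𝕏 => ⋃ x ∈ A, condRange S X x)
      (confComponents S X) (overlapClasses S X)
    ∧ (overlapClasses S X).ncard = (confComponents S X).ncard
    ∧ Real.logb 2 (((overlapClasses S X).ncard : ℝ))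
        = Real.logb 2 (((confComponents S X).ncard : ℝ)) := by

  have hbij : Set.BijOn (fun A : Set 𝕏 => ⋃ x ∈ A, condRange S X x)
      (confComponents S X) (overlapClasses S X) := by
    refine ⟨?_, ?_, ?_⟩
    · rintro A ⟨x, ⟨ω, hω⟩, rfl⟩
      exact ⟨S ω, ⟨ω, rfl⟩, image_component hω⟩
    · rintro A ⟨x, ⟨ω, hω⟩, rfl⟩ B ⟨y, ⟨ω', hω'⟩, rfl⟩ hAB
      simp only [image_component hω, image_component hω'] at hAB
      have hself : OverlapConn S X (S ω') (S ω') :=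
        rtg_to_overlapConn ⟨ω', rfl⟩ Relation.ReflTransGen.refl
      have h1 : OverlapConn S X (S ω) (S ω') := by
        have : S ω' ∈ {s' | OverlapConn S X (S ω) s'} := hAB ▸ hself
        exact this
      have hconn : ConfConn S X x y :=
        ⟨⟨ω, hω⟩, ⟨ω', hω'⟩,
          rtg_ov_to_conf (overlapConn_to_rtg h1) x y ⟨ω, hω, rfl⟩ ⟨ω', hω', rfl⟩⟩
      exact confConn_class_eq hconn
    · rintro C ⟨s, ⟨ω, rfl⟩, rfl⟩
      exact ⟨{x' | ConfConn S X (X ω) x'}, ⟨X ω, ⟨ω, rfl⟩, rfl⟩, image_component rfl⟩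
  have hcard : (overlapClasses S X).ncard = (confComponents S X).ncard := by
    rw [← hbij.image_eq, Set.ncard_image_of_injOn hbij.injOn]
  exact ⟨hbij, hcard, by rw [hcard]⟩
end

section
/- (Correctness of the subgraph merging procedure, Section V-B-1) Let $\mathcal{Q}$ be a partition of $\llbracket X\rrbracket$ and $G_{\mathcal{Q}}$ the simple graph on the blocks of $\mathcal{Q}$ with an edge between distinct blocks $\mathcal{X}, \mathcal{X}'$ iff $\llbracket S\mid\mathcal{X}\rrbracket \cap \llbracket S\mid\mathcal{X}'\rrbracket \neq \emptyset$, where $\llbracket S\mid\mathcal{X}\rrbracket = \bigcup_{x\in\mathcal{X}}\llbracket S\mid x\rrbracket$. Let $R$ be the smallest equivalence relation on $\llbracket X\rrbracket$ containing both the relation “$x$ and $x'$ lie in the same connected component of the confusability graph $G_X$” and the relation “$x$ and $x'$ lie in the same block of $\mathcal{Q}$”. Then two blocks $\mathcal{X}, \mathcal{X}' \in \mathcal{Q}$ lie in the same connected component of $G_{\mathcal{Q}}$ if and only if some $x \in \mathcal{X}$ and $x' \in \mathcal{X}'$ satisfy $x \mathbin{R} x'$; in particular, the number of connected components of $G_{\mathcal{Q}}$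 equals the number of equivalence classes of $R$. -/
/-- `⟦S∣𝒳⟧ = ⋃_{x ∈ 𝒳} ⟦S∣x⟧`. -/
def condRangeSet {Ω 𝕊 𝕏 : Type*} (S : Ω → 𝕊) (X : Ω → 𝕏) (A : Set 𝕏) : Set 𝕊 :=
  ⋃ x ∈ A, condRange S X x

/-- `P` is a partition of `U`. -/
def IsPartitionOf {α : Type*} (P : Set (Set α)) (U : Set α) : Prop :=
  (∀ A ∈ P, A.Nonempty) ∧ (∀ A ∈ P, ∀ B ∈ P, A ≠ B → Disjoint A B) ∧ ⋃₀ P = U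

/-- Adjacency between distinct blocks of `𝒬` whose conditional ranges intersect (`G_𝒬`). -/
def QAdj {Ω 𝕊 𝕏 : Type*} (S : Ω → 𝕊) (X : Ω → 𝕏) (Q : Set (Set 𝕏)) (A B : Set 𝕏) : Prop :=
  A ∈ Q ∧ B ∈ Q ∧ A ≠ B ∧ (condRangeSet S X A ∩ condRangeSet S X B).Nonempty

/-- Two blocks lie in the same connected component of `G_𝒬`. -/
def QConn {Ω 𝕊 𝕏 : Type*} (S : Ω → 𝕊) (X : Ω → 𝕏) (Q : Set (Set 𝕏)) (A B : Set 𝕏) : Prop :=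
  A ∈ Q ∧ B ∈ Q ∧ Relation.ReflTransGen (QAdj S X Q) A B

/-- The set of connected components of `G_𝒬`. -/
def QComponents {Ω 𝕊 𝕏 : Type*} (S : Ω → 𝕊) (X : Ω → 𝕏) (Q : Set (Set 𝕏)) :
    Set (Set (Set 𝕏)) :=
  {C | ∃ A ∈ Q, C = {B | QConn S X Q A B}}

/-- The smallest equivalence relation containing "same component of `G_X`" and
"same block of `𝒬`". -/
def mergedRel {Ω 𝕊 𝕏 : Type*} (S : Ω → 𝕊) (X : Ω → 𝕏) (Q : Set (Set 𝕏)) (x x' : 𝕏) : Prop :=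
  Relation.EqvGen (fun y y' => ConfConn S X y y' ∨ ∃ A ∈ Q, y ∈ A ∧ y' ∈ A) x x'


section Aux
variable {Ω 𝕊 𝕏 : Type*} {S : Ω → 𝕊} {X : Ω → 𝕏} {Q : Set (Set 𝕏)}

lemma qadj_symm {A B : Set 𝕏} (h : QAdj S X Q A B) : QAdj S X Q B A :=
  ⟨h.2.1, h.1, h.2.2.1.symm, by
    obtain ⟨s, hs1, hs2⟩ := h.2.2.2; exact ⟨s, hs2, hs1⟩⟩

lemma qconn_symm {A B : Set 𝕏} (h : QConn S X Q A B) : QConn S X Q B A :=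
  ⟨h.2.1, h.1, (@Relation.ReflTransGen.stdSymm _ _ ⟨fun _ _ => qadj_symm⟩).symm _ _ h.2.2⟩

lemma qconn_trans {A B C : Set 𝕏} (h1 : QConn S X Q A B) (h2 : QConn S X Q B C) :
    QConn S X Q A C :=
  ⟨h1.1, h2.2.1, h1.2.2.trans h2.2.2⟩

variable (hQ : IsPartitionOf Q (Set.range X))
include hQ

lemma block_eq {A B : Set 𝕏} {x : 𝕏} (hA : A ∈ Q) (hB : B ∈ Q) (hxA : x ∈ A) (hxB : x ∈ B) :
    A = B := by
  by_contra h
  exact (hQ.2.1 A hA B hB h).ne_of_mem hxA hxB rfl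

lemma block_sub_range {A : Set 𝕏} (hA : A ∈ Q) : A ⊆ Set.range X := by
  rw [← hQ.2.2]; exact Set.subset_sUnion_of_mem hA

lemma exists_block {x : 𝕏} (hx : x ∈ Set.range X) : ∃ A ∈ Q, x ∈ A := by
  rw [← hQ.2.2] at hx; exact hx

lemma qconn_to_merged {A B : Set 𝕏} (hA : A ∈ Q)
    (h : Relation.ReflTransGen (QAdj S X Q) A B) :
    ∃ x ∈ A, ∃ x' ∈ B, mergedRel S X Q x x' := by
  induction h with
  | refl =>
    obtain ⟨x, hx⟩ := hQ.1 A hA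
    exact ⟨x, hx, x, hx, Relation.EqvGen.refl x⟩
  | tail h1 hadj ih =>
    obtain ⟨x, hx, x1, hx1, hR⟩ := ih
    obtain ⟨s, hsB', hsB⟩ := hadj.2.2.2
    rw [condRangeSet] at hsB' hsB
    simp only [Set.mem_iUnion] at hsB' hsB
    obtain ⟨y, hyB', hsy⟩ := hsB'
    obtain ⟨y', hyB, hsy'⟩ := hsB
    have hyne : y ≠ y' := by
      rintro rfl
      exact (hQ.2.1 _ hadj.1 _ hadj.2.1 hadj.2.2.1).ne_of_mem hyB' hyB rfl
    have hadjyy' : ConfAdj S X y y' :=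
      ⟨hyne, block_sub_range hQ hadj.1 hyB', block_sub_range hQ hadj.2.1 hyB, ⟨s, hsy, hsy'⟩⟩
    have hconf : ConfConn S X y y' :=
      ⟨hadjyy'.2.1, hadjyy'.2.2.1, Relation.ReflTransGen.single hadjyy'⟩
    refine ⟨x, hx, y', hyB, ?_⟩
    refine (hR.trans _ _ _ (Relation.EqvGen.rel _ _ (Or.inr ⟨_, hadj.1, hx1, hyB'⟩))).trans _ _ _
      (Relation.EqvGen.rel _ _ (Or.inl hconf))

lemma conf_chain_qconn {y y' : 𝕏} (h : Relation.ReflTransGen (ConfAdj S X) y y') :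
    ∀ A ∈ Q, y ∈ A → ∀ B ∈ Q, y' ∈ B → QConn S X Q A B := by
  induction h with
  | refl =>
    intro A hA hy B hB hy'
    rw [block_eq hQ hA hB hy hy']
    exact ⟨hB, hB, Relation.ReflTransGen.refl⟩
  | tail h1 hadj ih =>
    intro A hA hy B hB hy'
    obtain ⟨C, hC, hzC⟩ := exists_block hQ hadj.2.1
    have hAC := ih A hA hy C hC hzC
    have hne : (condRangeSet S X C ∩ condRangeSet S X B).Nonempty := by
      obtain ⟨s, hs1, hs2⟩ := hadj.2.2.2
      refine ⟨s, ?_, ?_⟩ <;> rw [condRangeSet] <;> simp only [Set.mem_iUnion]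
      · exact ⟨_, hzC, hs1⟩
      · exact ⟨_, hy', hs2⟩
    by_cases hCB : C = B
    · rwa [hCB] at hAC
    · exact ⟨hA, hB, hAC.2.2.tail ⟨hC, hB, hCB, hne⟩⟩

lemma merged_to_qconn {x x' : 𝕏} (h : mergedRel S X Q x x') :
    ∀ A ∈ Q, x ∈ A → ∀ B ∈ Q, x' ∈ B → QConn S X Q A B := by
  have key : x = x' ∨ (x ∈ Set.range X ∧ x' ∈ Set.range X ∧
      ∀ A ∈ Q, x ∈ A → ∀ B ∈ Q, x' ∈ B → QConn S X Q A B) := by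
    induction h with
    | rel a b hab =>
      right
      rcases hab with hc | ⟨A0, hA0, haA0, hbA0⟩
      · exact ⟨hc.1, hc.2.1, fun A hA ha B hB hb => conf_chain_qconn hQ hc.2.2 A hA ha B hB hb⟩
      · refine ⟨block_sub_range hQ hA0 haA0, block_sub_range hQ hA0 hbA0, ?_⟩
        intro A hA ha B hB hb
        rw [block_eq hQ hA hA0 ha haA0, block_eq hQ hA0 hB hbA0 hb]
        exact ⟨hB, hB, Relation.ReflTransGen.refl⟩
    | refl a => exact Or.inl rfl
    | symm a b _ ih =>
      rcases ih with rfl | ⟨h1, h2, h3⟩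
      · exact Or.inl rfl
      · exact Or.inr ⟨h2, h1, fun A hA ha B hB hb => qconn_symm (h3 B hB hb A hA ha)⟩
    | trans a b c _ _ ih1 ih2 =>
      rcases ih1 with rfl | ⟨h1, h2, h3⟩
      · exact ih2
      rcases ih2 with rfl | ⟨h1', h2', h3'⟩
      · exact Or.inr ⟨h1, h2, h3⟩
      refine Or.inr ⟨h1, h2', ?_⟩
      intro A hA ha B hB hb
      obtain ⟨C, hC, hbC⟩ := exists_block hQ h2
      exact qconn_trans (h3 A hA ha C hC hbC) (h3' C hC hbC B hB hb)
  intro A hA ha B hB hb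
  rcases key with rfl | ⟨_, _, h3⟩
  · rw [block_eq hQ hA hB ha hb]; exact ⟨hB, hB, Relation.ReflTransGen.refl⟩
  · exact h3 A hA ha B hB hb

lemma sUnion_component {A : Set 𝕏} {x : 𝕏} (hA : A ∈ Q) (hx : x ∈ A) :
    ⋃₀ {B | QConn S X Q A B} = {x' ∈ Set.range X | mergedRel S X Q x x'} := by
  ext x'
  simp only [Set.mem_sUnion, Set.mem_setOf_eq, Set.mem_sep_iff]
  constructor
  · rintro ⟨B, hconn, hx'B⟩
    obtain ⟨x0, hx0, x1, hx1, hR⟩ := qconn_to_merged hQ hA hconn.2.2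
    have h1 : mergedRel S X Q x x0 := Relation.EqvGen.rel _ _ (Or.inr ⟨A, hA, hx, hx0⟩)
    have h2 : mergedRel S X Q x1 x' :=
      Relation.EqvGen.rel _ _ (Or.inr ⟨B, hconn.2.1, hx1, hx'B⟩)
    exact ⟨block_sub_range hQ hconn.2.1 hx'B, (h1.trans _ _ _ hR).trans _ _ _ h2⟩
  · rintro ⟨hx'r, hR⟩
    obtain ⟨B, hB, hx'B⟩ := exists_block hQ hx'r
    exact ⟨B, merged_to_qconn hQ hR A hA hx B hB hx'B, hx'B⟩

end Aux

/-- Correctness of the subgraph merging procedure (Section V-B-1): two blocks of `𝒬` lie in the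
same connected component of `G_𝒬` iff some of their elements are related by the smallest
equivalence relation `R` containing "same component of `G_X`" and "same block of `𝒬`"; in
particular the number of components of `G_𝒬` equals the number of equivalence classes of `R`
on `⟦X⟧`. -/
theorem subgraph_merging_correct {Ω 𝕊 𝕏 : Type*} [Nonempty Ω] [Fintype 𝕊] [Fintype 𝕏]
    (S : Ω → 𝕊) (X : Ω → 𝕏) (Q : Set (Set 𝕏)) (hQ : IsPartitionOf Q (Set.range X)) :
    (∀ A ∈ Q, ∀ B ∈ Q,
      (QConn S X Q A B ↔ ∃ x ∈ A, ∃ x' ∈ B, mergedRel S X Q x x'))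
    ∧ (QComponents S X Q).ncard
        = {C : Set 𝕏 | ∃ x ∈ Set.range X,
            C = {x' ∈ Set.range X | mergedRel S X Q x x'}}.ncard := by
  constructor
  · intro A hA B hB
    constructor
    · intro h
      exact qconn_to_merged hQ hA h.2.2
    · rintro ⟨x, hx, x', hx', hR⟩
      exact merged_to_qconn hQ hR A hA hx B hB hx'
  · have himg : {C : Set 𝕏 | ∃ x ∈ Set.range X,
        C = {x' ∈ Set.range X | mergedRel S X Q x x'}} = Set.sUnion '' QComponents S X Q := by
      ext C
      simp only [Set.mem_setOf_eq, Set.mem_image, QComponents]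
      constructor
      · rintro ⟨x, hxr, rfl⟩
        obtain ⟨A, hA, hxA⟩ := exists_block hQ hxr
        exact ⟨{B | QConn S X Q A B}, ⟨A, hA, rfl⟩, sUnion_component hQ hA hxA⟩
      · rintro ⟨D, ⟨A, hA, rfl⟩, rfl⟩
        obtain ⟨x, hx⟩ := hQ.1 A hA
        exact ⟨x, block_sub_range hQ hA hx, sUnion_component hQ hA hx⟩
    rw [himg]
    refine (Set.ncard_image_of_injOn ?_).symm
    rintro C1 ⟨A1, hA1, rfl⟩ C2 ⟨A2, hA2, rfl⟩ heq
    obtain ⟨x, hx⟩ := hQ.1 A1 hA1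
    have hx1 : x ∈ ⋃₀ {B | QConn S X Q A1 B} :=
      ⟨A1, ⟨hA1, hA1, Relation.ReflTransGen.refl⟩, hx⟩
    rw [heq] at hx1
    obtain ⟨B, hconn, hxB⟩ := hx1
    have hA1B : A1 = B := block_eq hQ hA1 hconn.2.1 hx hxB
    have h21 : QConn S X Q A2 A1 := hA1B ▸ hconn
    ext B'
    exact ⟨fun h => qconn_trans h21 h, fun h => qconn_trans (qconn_symm h21) h⟩
end

section
/- (Positive maximin information implies perfect distinguishability, Section III-C) If $s, s' \in \llbracket S\rrbracket$ lie in different equivalence classes of overlap connectedness (equivalently, in different blocks of the overlap partition of $\llbracket S\rrbracket$ — two such points exist precisely when $I_*(S;X) > 0$), then the conditional ranges of $X$ given $s$ and $s'$ are disjoint: $\llbracket X\mid s\rrbracket \cap \llbracket X\mid s'\rrbracket = \emptyset$, where $\llbracket X\mid s\rrbracket = \{X(\omega) : \omega \in \Omega,\ S(\omega) = s\}$. Thus an adversary observing $X$ can discriminate perfectly between $s$ and $s'$. -/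
/-- The conditional range `⟦X∣s⟧ = {X(ω) : ω ∈ Ω, S(ω) = s}`. -/
def condRangeX {Ω 𝕊 𝕏 : Type*} (S : Ω → 𝕊) (X : Ω → 𝕏) (s : 𝕊) : Set 𝕏 :=
  {x | ∃ ω, S ω = s ∧ X ω = x}

section

variable {Ω 𝕊 𝕏 : Type*} {S : Ω → 𝕊} {X : Ω → 𝕏} {s s' : 𝕊} {x : 𝕏}

theorem mem_condRange_iff_mem_condRangeX : s ∈ condRange S X x ↔ x ∈ condRangeX S X s :=
  exists_congr fun _ => and_comm

theorem mem_range_of_mem_condRange (hs : s ∈ condRange S X x) : x ∈ Set.range X :=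
  let ⟨ω, hX, _⟩ := hs
  ⟨ω, hX⟩

theorem overlapConn_of_mem_condRange (hs : s ∈ condRange S X x) (hs' : s' ∈ condRange S X x) :
    OverlapConn S X s s' :=
  ⟨0, fun _ => x, fun _ => mem_range_of_mem_condRange hs, hs, hs', fun i => i.elim0⟩

end

theorem not_overlapConn_disjoint_condRangeX_general {Ω 𝕊 𝕏 : Type*} (S : Ω → 𝕊) (X : Ω → 𝕏) (s s' : 𝕊)
    (h : ¬ OverlapConn S X s s') :
    condRangeX S X s ∩ condRangeX S X s' = ∅ := by
  refine Set.eq_empty_of_forall_notMem fun x ⟨hx, hx'⟩ => h ?_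
  rw [← mem_condRange_iff_mem_condRangeX] at hx hx'
  exact overlapConn_of_mem_condRange hx hx'

/-- Positive maximin information implies perfect distinguishability (Section III-C): if
`s, s' ∈ ⟦S⟧` lie in different equivalence classes of overlap connectedness (i.e. they are not
overlap connected), then `⟦X∣s⟧ ∩ ⟦X∣s'⟧ = ∅`, so an adversary observing `X` can discriminate
perfectly between `s` and `s'`. -/
theorem not_overlapConn_disjoint_condRangeX {Ω 𝕊 𝕏 : Type*} [Nonempty Ω] [Fintype 𝕊]
    [Fintype 𝕏] (S : Ω → 𝕊) (X : Ω → 𝕏) (s s' : 𝕊)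
    (hs : s ∈ Set.range S) (hs' : s' ∈ Set.range S)
    (h : ¬ OverlapConn S X s s') :
    condRangeX S X s ∩ condRangeX S X s' = ∅ :=
  not_overlapConn_disjoint_condRangeX_general S X s s' h
end
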